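/- arXiv:1711.07979 — 3 statements merged into one kernel-verified Lean document; each statement's English description precedes it below -/
import Mathlib

section
/- Let S be a finite set, P a probability mass function on S, a ∈ S a designated element with p := P(a) satisfying 0 < p < 1, and for θ ≥ 1 let Q_θ be the perturbed distribution on S. Then for all θ, θ' ≥ 1, the total variation (ℓ1) distance satisfies Σ_{s ∈ S} |Q_θ(s) − Q_{θ'}(s)| ≤ (2/e)·|θ − θ'|. -/
lemma rpow_inv_lipschitz (p : ℝ) (hp0 : 0 < p) (hp1 : p < 1)
    (θ θ' : ℝ) (hθ : 1 ≤ θ) (hθ' : 1 ≤ θ') :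
    |p ^ (1 / θ) - p ^ (1 / θ')| ≤ (1 / Real.exp 1) * |θ - θ'| := by
  set f : ℝ → ℝ := fun t => Real.exp (Real.log p * t⁻¹) with hf
  set f' : ℝ → ℝ := fun t => Real.exp (Real.log p * t⁻¹) * (Real.log p * (-(t ^ 2)⁻¹)) with hf'
  have hL : Real.log p < 0 := Real.log_neg hp0 hp1
  have hder : ∀ t ∈ Set.Ici (1:ℝ), HasDerivWithinAt f (f' t) (Set.Ici 1) t := by
    intro t ht
    have htne : t ≠ 0 := by simp at ht; linarith
    exact (((hasDerivAt_inv htne).const_mul (Real.log p)).exp).hasDerivWithinAt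
  have hbound : ∀ t ∈ Set.Ici (1:ℝ), ‖f' t‖ ≤ 1 / Real.exp 1 := by
    intro t ht
    have ht1 : (1:ℝ) ≤ t := ht
    have ht0 : 0 < t := by linarith
    set x : ℝ := -Real.log p * t⁻¹ with hx
    have hx0 : 0 < x := mul_pos (neg_pos.mpr hL) (inv_pos.mpr ht0)
    have h1 : Real.log p * t⁻¹ = -x := by rw [hx]; ring
    have h2 : ‖f' t‖ = Real.exp (-x) * (x / t) := by
      rw [hf', Real.norm_eq_abs, abs_mul, abs_of_pos (Real.exp_pos _), h1]
      congr 1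
      have hnn : 0 ≤ Real.log p * (-(t ^ 2)⁻¹) := by
        have : 0 < (t ^ 2)⁻¹ := inv_pos.mpr (pow_pos ht0 2)
        nlinarith
      rw [abs_of_nonneg hnn, hx]
      ring
    rw [h2]
    have key : Real.exp (-x) * x ≤ 1 / Real.exp 1 := by
      calc Real.exp (-x) * x ≤ Real.exp (-x) * Real.exp (x - 1) :=
            mul_le_mul_of_nonneg_left (by linarith [Real.add_one_le_exp (x - 1)])
              (le_of_lt (Real.exp_pos _))
        _ = Real.exp (-1) := by rw [← Real.exp_add]; ring_nf
        _ = 1 / Real.exp 1 := by rw [Real.exp_neg, one_div]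
    calc Real.exp (-x) * (x / t) ≤ Real.exp (-x) * x := by
          rw [mul_div_assoc']
          exact div_le_self (by positivity) ht1
      _ ≤ 1 / Real.exp 1 := key
  have hlip := Convex.norm_image_sub_le_of_norm_hasDerivWithin_le hder hbound
    (convex_Ici 1) (Set.mem_Ici.mpr hθ') (Set.mem_Ici.mpr hθ)
  have hfθ : f θ = p ^ (1 / θ) := by
    rw [hf, Real.rpow_def_of_pos hp0]; ring_nf
  have hfθ' : f θ' = p ^ (1 / θ') := by
    rw [hf, Real.rpow_def_of_pos hp0]; ring_nf
  rw [Real.norm_eq_abs, Real.norm_eq_abs, hfθ, hfθ'] at hlip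
  exact hlip

/-- **Lipschitz bound for the perturbed POI distribution.**
For a finite set `S`, a pmf `P` on `S`, a designated element `a` with
`p := P a ∈ (0,1)`, and the perturbed distribution
`Q θ s = p^(1/θ)` if `s = a` and `Q θ s = P s * (1 - p^(1/θ)) / (1 - p)` otherwise,
the ℓ1 distance between `Q θ` and `Q θ'` is at most `(2/e) * |θ - θ'|` for `θ, θ' ≥ 1`. -/
theorem perturbed_distribution_lipschitz
    {S : Type*} [Fintype S] [DecidableEq S] (P : S → ℝ)
    (hP : ∀ s, 0 ≤ P s) (hPsum : ∑ s, P s = 1)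
    (a : S) (hp0 : 0 < P a) (hp1 : P a < 1)
    (Q : ℝ → S → ℝ)
    (hQ : ∀ θ s, Q θ s =
      if s = a then (P a) ^ (1 / θ)
      else P s * (1 - (P a) ^ (1 / θ)) / (1 - P a))
    (θ θ' : ℝ) (hθ : 1 ≤ θ) (hθ' : 1 ≤ θ') :
    ∑ s, |Q θ s - Q θ' s| ≤ (2 / Real.exp 1) * |θ - θ'| := by
  set p := P a with hpdef
  set D := |p ^ (1 / θ) - p ^ (1 / θ')| with hD
  have h1p : 0 < 1 - p := by linarith
  have hrest : ∑ s ∈ Finset.univ.erase a, P s = 1 - p := by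
    have := Finset.sum_erase_add Finset.univ P (Finset.mem_univ a)
    linarith [hPsum ▸ this]
  have hsum : ∑ s, |Q θ s - Q θ' s| = 2 * D := by
    rw [← Finset.sum_erase_add _ _ (Finset.mem_univ a)]
    have ha : |Q θ a - Q θ' a| = D := by
      rw [hQ, hQ, if_pos rfl, if_pos rfl]
    have hb : ∀ s ∈ Finset.univ.erase a,
        |Q θ s - Q θ' s| = P s / (1 - p) * D := by
      intro s hs
      have hsne : s ≠ a := Finset.ne_of_mem_erase hs
      rw [hQ, hQ, if_neg hsne, if_neg hsne]
      rw [div_sub_div_same, show P s * (1 - p ^ (1/θ)) - P s * (1 - p ^ (1/θ')) =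
        P s * (p ^ (1/θ') - p ^ (1/θ)) by ring, mul_div_assoc, abs_mul, abs_of_nonneg (hP s),
        abs_div, abs_of_pos h1p, abs_sub_comm, ← hD, div_mul_eq_mul_div, mul_div_assoc]
    rw [Finset.sum_congr rfl hb, ha, ← Finset.sum_mul, ← Finset.sum_div, hrest,
      div_self (ne_of_gt h1p), one_mul]
    ring
  rw [hsum]
  have hkey := rpow_inv_lipschitz p hp0 hp1 θ θ' hθ hθ'
  rw [← hD] at hkey
  calc 2 * D ≤ 2 * (1 / Real.exp 1 * |θ - θ'|) := by linarith
    _ = 2 / Real.exp 1 * |θ - θ'| := by ring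
end

section
/- For every real p with 0 < p ≤ 1, the function θ ↦ p^{1/θ} is (1/e)-Lipschitz on [1, ∞): for all θ, θ' ≥ 1, |p^{1/θ} − p^{1/θ'}| ≤ (1/e)·|θ − θ'|. -/
open Real

lemma aux_t_exp_neg_le (t : ℝ) (ht : 0 ≤ t) : t * Real.exp (-t) ≤ Real.exp (-1) := by
  have h := Real.add_one_le_exp (t - 1)
  have h2 : t ≤ Real.exp (t - 1) := by linarith
  calc t * Real.exp (-t) ≤ Real.exp (t - 1) * Real.exp (-t) := by
        apply mul_le_mul_of_nonneg_right h2 (Real.exp_nonneg _)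
    _ = Real.exp (-1) := by rw [← Real.exp_add]; ring_nf

lemma aux_bound (p : ℝ) (hp0 : 0 < p) (hp1 : p ≤ 1) (x : ℝ) (hx : 1 ≤ x) :
    |Real.exp (Real.log p / x) * (Real.log p * -(x ^ 2)⁻¹)| ≤ 1 / Real.exp 1 := by
  have hlp : Real.log p ≤ 0 := Real.log_nonpos hp0.le hp1
  set c := -Real.log p with hc
  have hc0 : 0 ≤ c := by simp [hc]; linarith
  have hx0 : 0 < x := lt_of_lt_of_le one_pos hx
  have e1 : Real.log p / x = -(c / x) := by rw [hc]; ring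
  have e2 : Real.log p * -(x ^ 2)⁻¹ = c / x ^ 2 := by rw [hc]; ring
  have habs : |Real.exp (Real.log p / x) * (Real.log p * -(x ^ 2)⁻¹)|
      = Real.exp (-(c / x)) * (c / x ^ 2) := by
    rw [e1, e2, abs_mul, Real.abs_exp, abs_of_nonneg (by positivity : (0:ℝ) ≤ c / x ^ 2)]
  rw [habs]
  have key : Real.exp (-(c / x)) * (c / x ^ 2) = (c / x * Real.exp (-(c / x))) * x⁻¹ := by
    field_simp
  rw [key]
  have h1 : c / x * Real.exp (-(c / x)) ≤ Real.exp (-1) :=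
    aux_t_exp_neg_le _ (by positivity)
  have h2 : x⁻¹ ≤ 1 := by
    rw [inv_le_one_iff₀]; right; exact hx
  calc (c / x * Real.exp (-(c / x))) * x⁻¹ ≤ Real.exp (-1) * 1 := by
        apply mul_le_mul h1 h2 (by positivity) (Real.exp_nonneg _)
    _ = 1 / Real.exp 1 := by rw [Real.exp_neg]; ring

lemma aux_ordered (p : ℝ) (hp0 : 0 < p) (hp1 : p ≤ 1)
    (a b : ℝ) (ha : 1 ≤ a) (hab : a ≤ b) :
    |p ^ (1 / b) - p ^ (1 / a)| ≤ (1 / Real.exp 1) * (b - a) := by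
  set f : ℝ → ℝ := fun x => Real.exp (Real.log p / x) with hf
  set f' : ℝ → ℝ := fun x => Real.exp (Real.log p / x) * (Real.log p * -(x ^ 2)⁻¹) with hf'
  have hderiv : ∀ x ∈ Set.Icc a b, HasDerivWithinAt f (f' x) (Set.Icc a b) x := by
    intro x hx
    have hx1 : 1 ≤ x := le_trans ha hx.1
    have hx0 : x ≠ 0 := by positivity
    have h1 : HasDerivAt (fun x : ℝ => Real.log p / x) (Real.log p * -(x ^ 2)⁻¹) x := by
      simpa [div_eq_mul_inv] using (hasDerivAt_inv hx0).const_mul (Real.log p)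
    exact (h1.exp).hasDerivWithinAt
  have hbound : ∀ x ∈ Set.Ico a b, ‖f' x‖ ≤ 1 / Real.exp 1 := by
    intro x hx
    exact aux_bound p hp0 hp1 x (le_trans ha hx.1)
  have := norm_image_sub_le_of_norm_deriv_le_segment' hderiv hbound b
    (Set.right_mem_Icc.mpr hab)
  have hrw : ∀ x : ℝ, 1 ≤ x → p ^ (1 / x) = f x := by
    intro x hx
    rw [hf, Real.rpow_def_of_pos hp0]
    congr 1; ring
  rw [hrw b (le_trans ha hab), hrw a ha]
  simpa [Real.norm_eq_abs] using this

/-- For `0 < p ≤ 1`, the map `θ ↦ p^(1/θ)` is `(1/e)`-Lipschitz on `[1, ∞)`. -/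
theorem rpow_one_div_lipschitz
    (p : ℝ) (hp0 : 0 < p) (hp1 : p ≤ 1)
    (θ θ' : ℝ) (hθ : 1 ≤ θ) (hθ' : 1 ≤ θ') :
    |p ^ (1 / θ) - p ^ (1 / θ')| ≤ (1 / Real.exp 1) * |θ - θ'| := by
  rcases le_total θ' θ with h | h
  · have h1 := aux_ordered p hp0 hp1 θ' θ hθ' h
    have h2 : |θ - θ'| = θ - θ' := abs_of_nonneg (by linarith)
    rw [h2]; exact h1
  · have h1 := aux_ordered p hp0 hp1 θ θ' hθ h
    have h2 : |θ - θ'| = θ' - θ := by rw [abs_sub_comm]; exact abs_of_nonneg (by linarith)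
    rw [h2, abs_sub_comm]; exact h1
end

section
/- Let Δ_P ∈ (0, 1/2), let θ_max ≥ 1, and define c₀ := min{ Δ_P·ln(1/Δ_P), (1 − Δ_P)·ln(1/(1 − Δ_P)) } / θ_max². Then for every real p with Δ_P ≤ p ≤ 1 − Δ_P and all reals θ, θ' with 1 ≤ θ ≤ θ_max and 1 ≤ θ' ≤ θ_max, the expected log-likelihood ratio satisfies p^{1/θ'}·ln(p^{1/θ}/p^{1/θ'}) + (1 − p^{1/θ'})·ln((1 − p^{1/θ})/(1 − p^{1/θ'})) ≤ −2·c₀²·(θ − θ')². -/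
/-!
Write `q = p^(1/θ)` and `q' = p^(1/θ')`. The left-hand side is `-KL(Ber q' ‖ Ber q)`, so by
Pinsker's inequality for Bernoulli laws it is at most `-2 (q - q')²`. It remains to see that
`θ ↦ p^(1/θ)` moves at speed at least `c₀`: by convexity of `exp`,
`p^(1/θ) - p^(1/θ') ≥ p^(1/θ') (-log p) (1/θ' - 1/θ) ≥ -p log p · (θ - θ') / θmax²` for `θ' ≤ θ`,
and `-p log p` is concave, so on `[Δ_P, 1 - Δ_P]` it is at least its minimum at the endpoints.
-/

open Real Set

/-- `KL(Ber a ‖ Ber b)`. -/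
noncomputable def bernoulliKL (a b : ℝ) : ℝ :=
  a * log (a / b) + (1 - a) * log ((1 - a) / (1 - b))

noncomputable def pinskerPotential (a x : ℝ) : ℝ :=
  a * log x + (1 - a) * log (1 - x) + 2 * (x - a) ^ 2

lemma neg_bernoulliKL (a b : ℝ) :
    -bernoulliKL a b = a * log (b / a) + (1 - a) * log ((1 - b) / (1 - a)) := by
  rw [bernoulliKL, ← inv_div a, ← inv_div (1 - a), log_inv, log_inv]
  ring

lemma le_of_hasDerivAt_of_nonneg_of_nonpos {f f' : ℝ → ℝ} {s : Set ℝ} (hs : s.OrdConnected)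
    {c x : ℝ} (hc : c ∈ s) (hx : x ∈ s) (hf : ∀ y ∈ s, HasDerivAt f (f' y) y)
    (hleft : ∀ y ∈ s, y < c → 0 ≤ f' y) (hright : ∀ y ∈ s, c < y → f' y ≤ 0) :
    f x ≤ f c := by
  have hcont : ∀ {a b}, a ∈ s → b ∈ s → ContinuousOn f (Icc a b) := fun ha hb y hy ↦
    (hf y (hs.out ha hb hy)).continuousAt.continuousWithinAt
  have hderiv : ∀ {a b}, a ∈ s → b ∈ s → ∀ y ∈ interior (Icc a b),
      HasDerivWithinAt f (f' y) (interior (Icc a b)) y := fun ha hb y hy ↦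
    (hf y (hs.out ha hb (interior_subset hy))).hasDerivWithinAt
  rcases le_total x c with hxc | hcx
  · refine monotoneOn_of_hasDerivWithinAt_nonneg (convex_Icc x c) (hcont hx hc) (hderiv hx hc)
      (fun y hy ↦ ?_) (left_mem_Icc.2 hxc) (right_mem_Icc.2 hxc) hxc
    rw [interior_Icc] at hy
    exact hleft y (hs.out hx hc (Ioo_subset_Icc_self hy)) hy.2
  · refine antitoneOn_of_hasDerivWithinAt_nonpos (convex_Icc c x) (hcont hc hx) (hderiv hc hx)
      (fun y hy ↦ ?_) (left_mem_Icc.2 hcx) (right_mem_Icc.2 hcx) hcx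
    rw [interior_Icc] at hy
    exact hright y (hs.out hc hx (Ioo_subset_Icc_self hy)) hy.1

lemma hasDerivAt_pinskerPotential {a x : ℝ} (hx0 : 0 < x) (hx1 : x < 1) :
    HasDerivAt (pinskerPotential a) ((a - x) * (2 * x - 1) ^ 2 / (x * (1 - x))) x := by
  have hlog : HasDerivAt log x⁻¹ x := hasDerivAt_log hx0.ne'
  have hlog_one_sub : HasDerivAt (fun x ↦ log (1 - x)) (-1 / (1 - x)) x :=
    ((hasDerivAt_id' x).const_sub 1).log (sub_ne_zero.2 hx1.ne')
  have hsq : HasDerivAt (fun x ↦ (x - a) ^ 2) (2 * (x - a)) x := by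
    simpa using ((hasDerivAt_id x).sub_const a).fun_pow 2
  refine (((hlog.const_mul a).fun_add (hlog_one_sub.const_mul (1 - a))).fun_add
    (hsq.const_mul 2)).congr_deriv ?_
  field_simp [hx0.ne', sub_ne_zero.2 hx1.ne']
  ring

/-- **Pinsker's inequality** for Bernoulli distributions. -/
theorem two_mul_sq_sub_le_bernoulliKL {a b : ℝ} (ha0 : 0 < a) (ha1 : a < 1) (hb0 : 0 < b)
    (hb1 : b < 1) : 2 * (a - b) ^ 2 ≤ bernoulliKL a b := by
  have hmax := le_of_hasDerivAt_of_nonneg_of_nonpos (f := pinskerPotential a) ordConnected_Ioo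
    ⟨ha0, ha1⟩ ⟨hb0, hb1⟩ (fun y hy ↦ hasDerivAt_pinskerPotential hy.1 hy.2)
    (fun y hy hya ↦ div_nonneg (mul_nonneg (by linarith) (sq_nonneg _))
      (mul_pos hy.1 (sub_pos.2 hy.2)).le)
    (fun y hy hay ↦ div_nonpos_of_nonpos_of_nonneg
      (mul_nonpos_of_nonpos_of_nonneg (by linarith) (sq_nonneg _))
      (mul_pos hy.1 (sub_pos.2 hy.2)).le)
  rw [pinskerPotential, pinskerPotential] at hmax
  rw [bernoulliKL, log_div ha0.ne' hb0.ne', log_div (by linarith) (by linarith)]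
  linarith

lemma rpow_mul_log_mul_sub_le_rpow_sub_rpow {p : ℝ} (hp : 0 < p) (x y : ℝ) :
    p ^ x * log p * (y - x) ≤ p ^ y - p ^ x := by
  have hexp : p ^ y = p ^ x * exp (log p * (y - x)) := by
    rw [rpow_def_of_pos hp, rpow_def_of_pos hp, ← exp_add]
    ring_nf
  rw [hexp]
  nlinarith [add_one_le_exp (log p * (y - x)), rpow_pos_of_pos hp x]

lemma negMulLog_mul_sub_le_rpow_one_div_sub {p a b : ℝ} (hp0 : 0 < p) (hp1 : p ≤ 1)
    (hb : 1 ≤ b) (hba : b ≤ a) :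
    negMulLog p * (1 / b - 1 / a) ≤ p ^ (1 / a) - p ^ (1 / b) := by
  have hp_le : p ≤ p ^ (1 / b) := by
    simpa using rpow_le_rpow_of_exponent_ge hp0 hp1 (div_le_one_of_le₀ hb (by linarith))
  have hinv : 0 ≤ 1 / b - 1 / a := sub_nonneg.2 (one_div_le_one_div_of_le (by linarith) hba)
  have hlog : 0 ≤ -log p := neg_nonneg.2 (log_nonpos hp0.le hp1)
  calc negMulLog p * (1 / b - 1 / a) = p * -log p * (1 / b - 1 / a) := by
        rw [negMulLog]; ring
    _ ≤ p ^ (1 / b) * -log p * (1 / b - 1 / a) := by gcongr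
    _ = p ^ (1 / b) * log p * (1 / a - 1 / b) := by ring
    _ ≤ p ^ (1 / a) - p ^ (1 / b) := rpow_mul_log_mul_sub_le_rpow_sub_rpow hp0 _ _

lemma negMulLog_div_sq_mul_abs_sub_le {p a b M : ℝ} (hp0 : 0 < p) (hp1 : p ≤ 1)
    (ha : 1 ≤ a) (haM : a ≤ M) (hb : 1 ≤ b) (hbM : b ≤ M) :
    negMulLog p / M ^ 2 * |a - b| ≤ |p ^ (1 / a) - p ^ (1 / b)| := by
  wlog hba : b ≤ a generalizing a b
  · rw [abs_sub_comm, abs_sub_comm (p ^ _)]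
    exact this hb hbM ha haM (le_of_not_ge hba)
  have hgap := negMulLog_mul_sub_le_rpow_one_div_sub hp0 hp1 hb hba
  have hinv : (a - b) / M ^ 2 ≤ 1 / b - 1 / a := by
    have hab : 1 / b - 1 / a = (a - b) / (b * a) := by field_simp
    rw [hab]
    exact div_le_div_of_nonneg_left (sub_nonneg.2 hba) (by positivity)
      (mul_le_mul hbM haM (by linarith) (by linarith) |>.trans_eq (sq M).symm)
  have hent : 0 ≤ negMulLog p := negMulLog_nonneg hp0.le hp1
  calc negMulLog p / M ^ 2 * |a - b| = negMulLog p * ((a - b) / M ^ 2) := by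
        rw [abs_of_nonneg (sub_nonneg.2 hba)]; ring
    _ ≤ negMulLog p * (1 / b - 1 / a) := by gcongr
    _ ≤ |p ^ (1 / a) - p ^ (1 / b)| := hgap.trans (le_abs_self _)

theorem expected_log_likelihood_ratio_le_general
    (ΔP : ℝ) (hΔ0 : 0 < ΔP)
    (θmax : ℝ)
    (c₀ : ℝ)
    (hc₀ : c₀ = min (ΔP * Real.log (1 / ΔP)) ((1 - ΔP) * Real.log (1 / (1 - ΔP)))
      / θmax ^ 2)
    (p : ℝ) (hpl : ΔP ≤ p) (hpu : p ≤ 1 - ΔP)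
    (θ θ' : ℝ) (hθ1 : 1 ≤ θ) (hθm : θ ≤ θmax) (hθ'1 : 1 ≤ θ') (hθ'm : θ' ≤ θmax) :
    p ^ (1 / θ') * Real.log (p ^ (1 / θ) / p ^ (1 / θ'))
      + (1 - p ^ (1 / θ')) * Real.log ((1 - p ^ (1 / θ)) / (1 - p ^ (1 / θ')))
      ≤ -2 * c₀ ^ 2 * (θ - θ') ^ 2 := by
  have hp0 : 0 < p := hΔ0.trans_le hpl
  have hp1 : p < 1 := by linarith
  have hq : ∀ {t : ℝ}, 1 ≤ t → 0 < p ^ (1 / t) ∧ p ^ (1 / t) < 1 := fun ht ↦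
    ⟨rpow_pos_of_pos hp0 _, rpow_lt_one hp0.le hp1 (by positivity)⟩
  have hc₀_eq : c₀ = min (negMulLog ΔP) (negMulLog (1 - ΔP)) / θmax ^ 2 := by
    simp only [hc₀, negMulLog, one_div, log_inv, mul_neg, neg_mul]
  have hc₀_nonneg : 0 ≤ c₀ := by
    rw [hc₀_eq]
    exact div_nonneg (le_min (negMulLog_nonneg hΔ0.le (by linarith))
      (negMulLog_nonneg (by linarith) (by linarith))) (sq_nonneg _)
  have hc₀_le : c₀ ≤ negMulLog p / θmax ^ 2 := by
    rw [hc₀_eq]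
    gcongr
    exact concaveOn_negMulLog.min_le_of_mem_Icc hΔ0.le (mem_Ici.2 (by linarith)) ⟨hpl, hpu⟩
  have hspeed : c₀ * |θ - θ'| ≤ |p ^ (1 / θ') - p ^ (1 / θ)| :=
    (mul_le_mul_of_nonneg_right hc₀_le (abs_nonneg _)).trans
      ((negMulLog_div_sq_mul_abs_sub_le hp0 hp1.le hθ1 hθm hθ'1 hθ'm).trans_eq
        (abs_sub_comm _ _))
  have hsq : c₀ ^ 2 * (θ - θ') ^ 2 ≤ (p ^ (1 / θ') - p ^ (1 / θ)) ^ 2 := by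
    simpa [mul_pow, sq_abs] using pow_le_pow_left₀ (by positivity) hspeed 2
  rw [← neg_bernoulliKL]
  linarith [two_mul_sq_sub_le_bernoulliKL (hq hθ'1).1 (hq hθ'1).2 (hq hθ1).1 (hq hθ1).2]

/-- **Expected log-likelihood ratio bound for the POI model.**
Let `Δ_P ∈ (0, 1/2)`, `θmax ≥ 1` and
`c₀ = min {Δ_P·ln(1/Δ_P), (1-Δ_P)·ln(1/(1-Δ_P))} / θmax²`. Then for
`Δ_P ≤ p ≤ 1 - Δ_P` and `1 ≤ θ, θ' ≤ θmax`,
`p^(1/θ')·ln(p^(1/θ)/p^(1/θ')) + (1-p^(1/θ'))·ln((1-p^(1/θ))/(1-p^(1/θ')))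
  ≤ -2·c₀²·(θ-θ')²`. -/
theorem expected_log_likelihood_ratio_le
    (ΔP : ℝ) (hΔ0 : 0 < ΔP) (hΔ : ΔP < 1 / 2)
    (θmax : ℝ) (hθmax : 1 ≤ θmax)
    (c₀ : ℝ)
    (hc₀ : c₀ = min (ΔP * Real.log (1 / ΔP)) ((1 - ΔP) * Real.log (1 / (1 - ΔP)))
      / θmax ^ 2)
    (p : ℝ) (hpl : ΔP ≤ p) (hpu : p ≤ 1 - ΔP)
    (θ θ' : ℝ) (hθ1 : 1 ≤ θ) (hθm : θ ≤ θmax) (hθ'1 : 1 ≤ θ') (hθ'm : θ' ≤ θmax) :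
    p ^ (1 / θ') * Real.log (p ^ (1 / θ) / p ^ (1 / θ'))
      + (1 - p ^ (1 / θ')) * Real.log ((1 - p ^ (1 / θ)) / (1 - p ^ (1 / θ')))
      ≤ -2 * c₀ ^ 2 * (θ - θ') ^ 2 :=
  expected_log_likelihood_ratio_le_general ΔP hΔ0 θmax c₀ hc₀ p hpl hpu θ θ' hθ1 hθm hθ'1 hθ'm
end
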